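/- Fix an integer L ≥ 3 and let 𝔟 ⊆ sl(2,ℂ) be the set of lower-triangular traceless 2×2 complex matrices. Let x ∈ H_L be the unit vector x = (e₀ + √L·w_L)/√(L+1), where e₀ is the indicator of the all-zeros function and w_L is the L-qubit W state. For B ∈ 𝔟 and k ∈ {1,…,L} let B^{(k)}x denote the action of B on the k-th tensor factor of x. Then the ℂ-linear span of {x} ∪ {∑_{k=1}^{L} B_k^{(k)} x : B₁,…,B_L ∈ 𝔟} has complex dimension 2L + 1. (This is the key computation showing that the closure of the L-qubit W SLOCC class is a spherical variety.) -/
import Mathlib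


open scoped BigOperators

/-- The `L`-qubit Hilbert space. -/
abbrev HL (L : ℕ) := (Fin L → Fin 2) → ℂ

/-- Squared Hermitian norm of a vector in `HL L`. -/
noncomputable def normSqL {L : ℕ} (v : HL L) : ℝ := ∑ f : Fin L → Fin 2, Complex.normSq (v f)

/-- The action of an `L`-tuple of 2×2 matrices on `HL L` by the tensor product. -/
noncomputable def tensorL {L : ℕ} (A : Fin L → Matrix (Fin 2) (Fin 2) ℂ) (v : HL L) : HL L :=
  fun f => ∑ g : Fin L → Fin 2, (∏ k, A k (f k) (g k)) * v g

/-- The `k`-th one-qubit reduced density matrix of `v : HL L`. -/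
noncomputable def rhoL {L : ℕ} (k : Fin L) (v : HL L) : Matrix (Fin 2) (Fin 2) ℂ :=
  Matrix.of fun a a' => ∑ f : Fin L → Fin 2,
    if f k = a then v f * star (v (Function.update f k a')) else 0

/-- Minimal (real) eigenvalue of a 2×2 complex matrix. -/
noncomputable def minEig (ρ : Matrix (Fin 2) (Fin 2) ℂ) : ℝ :=
  sInf {t : ℝ | (t : ℂ) ∈ spectrum ℂ ρ}

/-- The `L`-qubit W state. -/
noncomputable def wL (L : ℕ) : HL L := fun f =>
  if ∃ k : Fin L, f = Function.update (fun _ => 0) k 1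
  then ((1 / Real.sqrt L : ℝ) : ℂ) else 0

/-- The SLOCC class of the `L`-qubit W state. -/
def WClassL (L : ℕ) : Set (HL L) :=
  {v | ∃ (A : Fin L → Matrix (Fin 2) (Fin 2) ℂ) (l : ℂ),
    (∀ k, (A k).det = 1) ∧ l ≠ 0 ∧ v = l • tensorL A (wL L)}

/-- Membership in the Borel subalgebra `𝔟 ⊆ sl(2,ℂ)` of lower-triangular traceless
matrices. -/
def IsLowerTriangularTraceless (A : Matrix (Fin 2) (Fin 2) ℂ) : Prop :=
  A 0 1 = 0 ∧ A.trace = 0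

/-- The action of a single 2×2 matrix `B` on the `k`-th tensor factor. -/
noncomputable def actFactor {L : ℕ} (B : Matrix (Fin 2) (Fin 2) ℂ) (k : Fin L)
    (v : HL L) : HL L :=
  fun f => ∑ a' : Fin 2, B (f k) a' * v (Function.update f k a')

/-- The indicator vector of the all-zeros configuration. -/
noncomputable def e0 (L : ℕ) : HL L := fun f => if f = fun _ => 0 then 1 else 0

/-- The unit vector `x = (e₀ + √L·w_L)/√(L+1)` in the `L`-qubit W SLOCC class. -/
noncomputable def xBorelL (L : ℕ) : HL L :=
  (((Real.sqrt (L + 1) : ℝ) : ℂ))⁻¹ • (e0 L + ((Real.sqrt L : ℝ) : ℂ) • wL L)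

namespace BorelW

variable {L : ℕ}

noncomputable def δ (g : Fin L → Fin 2) : HL L := fun f => if f = g then 1 else 0

@[simp] lemma δ_apply (g f : Fin L → Fin 2) : δ g f = if f = g then 1 else 0 := rfl

def zf (L : ℕ) : Fin L → Fin 2 := fun _ => 0

def eV (k : Fin L) : Fin L → Fin 2 := Function.update (zf L) k 1

def P (j k : Fin L) : Fin L → Fin 2 := Function.update (eV j) k 1

@[simp] lemma eV_apply (k i : Fin L) : eV k i = if i = k then 1 else 0 := by
  simp [eV, zf, Function.update_apply]

@[simp] lemma P_apply (j k i : Fin L) :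
    P j k i = if i = k then 1 else if i = j then 1 else 0 := by
  simp [P, Function.update_apply]

lemma ite_one_zero {c : Prop} [Decidable c] (h : (if c then (1 : Fin 2) else 0) = 1) : c := by
  by_contra hc
  rw [if_neg hc] at h
  exact absurd h (by decide)

lemma eV_inj {j k : Fin L} (h : eV j = eV k) : j = k := by
  have := congrFun h j
  simp only [eV_apply, if_pos rfl] at this
  exact ite_one_zero this.symm

lemma eV_eq_iff {j k : Fin L} : eV j = eV k ↔ j = k :=
  ⟨eV_inj, fun h => h ▸ rfl⟩

lemma eV_ne_zf (k : Fin L) : eV k ≠ zf L := by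
  intro h
  have := congrFun h k
  simp only [eV_apply, if_pos rfl, zf] at this
  exact absurd this (by decide)

lemma P_ne_zf {j k : Fin L} : P j k ≠ zf L := by
  intro h
  have := congrFun h k
  simp only [P_apply, if_pos rfl, if_true, eq_self_iff_true, zf] at this
  exact absurd this (by decide)

lemma P_ne_eV {j k : Fin L} (hjk : j ≠ k) (m : Fin L) : P j k ≠ eV m := by
  intro h
  have h1 := congrFun h j
  have h2 := congrFun h k
  simp only [P_apply, eV_apply, if_pos rfl, if_neg hjk, if_true, eq_self_iff_true] at h1 h2
  have hjm : j = m := ite_one_zero h1.symm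
  have hkm : k = m := ite_one_zero h2.symm
  exact hjk (hjm.trans hkm.symm)

lemma P_eq_iff {j k m n : Fin L} (hjk : j ≠ k) (hmn : m ≠ n) :
    P j k = P m n ↔ (j = m ∧ k = n) ∨ (j = n ∧ k = m) := by
  constructor
  · intro h
    by_cases hkn : k = n
    · subst hkn
      have hm := congrFun h m
      have hmk : m ≠ k := hmn
      simp only [P_apply, if_neg hmk, if_pos rfl, if_neg hmn, if_true, eq_self_iff_true] at hm
      exact Or.inl ⟨(ite_one_zero hm).symm, rfl⟩
    · have hk := congrFun h k
      simp only [P_apply, if_pos rfl, if_neg hkn, if_true, eq_self_iff_true] at hk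
      have hkm : k = m := ite_one_zero hk.symm
      subst hkm
      have hn := congrFun h n
      have hnk : n ≠ k := fun h' => hkn h'.symm
      simp only [P_apply, if_neg hnk, if_pos rfl, if_true, eq_self_iff_true] at hn
      exact Or.inr ⟨(ite_one_zero hn).symm, rfl⟩
  · rintro (⟨rfl, rfl⟩ | ⟨rfl, rfl⟩)
    · rfl
    · funext i
      simp only [P_apply]
      by_cases h1 : i = k <;> by_cases h2 : i = j <;> simp [h1, h2]

def Hm : Matrix (Fin 2) (Fin 2) ℂ := !![1, 0; 0, -1]
def E21 : Matrix (Fin 2) (Fin 2) ℂ := !![0, 0; 1, 0]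

@[simp] lemma Hm00 : Hm 0 0 = 1 := rfl
@[simp] lemma Hm01 : Hm 0 1 = 0 := rfl
@[simp] lemma Hm10 : Hm 1 0 = 0 := rfl
@[simp] lemma Hm11 : Hm 1 1 = -1 := rfl
@[simp] lemma E00 : E21 0 0 = 0 := rfl
@[simp] lemma E01 : E21 0 1 = 0 := rfl
@[simp] lemma E10 : E21 1 0 = 1 := rfl
@[simp] lemma E11 : E21 1 1 = 0 := rfl

lemma Hm_mem : IsLowerTriangularTraceless Hm := by
  constructor
  · rfl
  · simp [Matrix.trace, Matrix.diag, Fin.sum_univ_two, Hm]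
lemma E21_mem : IsLowerTriangularTraceless E21 := by
  constructor
  · rfl
  · simp [Matrix.trace, Matrix.diag, Fin.sum_univ_two, E21]
lemma zeroLT_mem : IsLowerTriangularTraceless 0 := by
  constructor <;> simp

lemma lower_decomp {A : Matrix (Fin 2) (Fin 2) ℂ} (h : IsLowerTriangularTraceless A) :
    A = A 0 0 • Hm + A 1 0 • E21 := by
  obtain ⟨h1, h2⟩ := h
  have h3 : A 1 1 = -A 0 0 := by
    have : A 0 0 + A 1 1 = 0 := by
      simpa [Matrix.trace, Matrix.diag, Fin.sum_univ_two] using h2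
    linear_combination this
  ext i j
  fin_cases i <;> fin_cases j <;>
    simp [Matrix.add_apply, Matrix.smul_apply, h1, h3, smul_eq_mul]

lemma actFactor_zero (k : Fin L) (v : HL L) :
    actFactor (0 : Matrix (Fin 2) (Fin 2) ℂ) k v = 0 := by
  funext f; simp [actFactor]

lemma actFactor_smul_mat (a : ℂ) (B : Matrix (Fin 2) (Fin 2) ℂ) (k : Fin L) (v : HL L) :
    actFactor (a • B) k v = a • actFactor B k v := by
  funext f
  simp only [actFactor, Matrix.smul_apply, smul_eq_mul, Pi.smul_apply, Fin.sum_univ_two]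
  ring

lemma actFactor_add_mat (B C : Matrix (Fin 2) (Fin 2) ℂ) (k : Fin L) (v : HL L) :
    actFactor (B + C) k v = actFactor B k v + actFactor C k v := by
  funext f
  simp [actFactor, add_mul, Finset.sum_add_distrib]

lemma actFactor_smul_vec (B : Matrix (Fin 2) (Fin 2) ℂ) (k : Fin L) (a : ℂ) (v : HL L) :
    actFactor B k (a • v) = a • actFactor B k v := by
  funext f
  simp only [actFactor, Pi.smul_apply, smul_eq_mul, Fin.sum_univ_two]
  ring

lemma actFactor_add_vec (B : Matrix (Fin 2) (Fin 2) ℂ) (k : Fin L) (v w : HL L) :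
    actFactor B k (v + w) = actFactor B k v + actFactor B k w := by
  funext f
  simp [actFactor, mul_add, Finset.sum_add_distrib]

lemma actFactor_sum_vec {ι : Type*} (B : Matrix (Fin 2) (Fin 2) ℂ) (k : Fin L)
    (s : Finset ι) (v : ι → HL L) :
    actFactor B k (∑ j ∈ s, v j) = ∑ j ∈ s, actFactor B k (v j) := by
  induction s using Finset.cons_induction with
  | empty => simpa using actFactor_zero k 0 |>.symm ▸ (by funext f; simp [actFactor])
  | cons a s ha ih => rw [Finset.sum_cons, actFactor_add_vec, ih, Finset.sum_cons]

lemma upd_eq_iff {f g : Fin L → Fin 2} {k : Fin L} {a : Fin 2} :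
    Function.update f k a = g ↔ f = Function.update g k (f k) ∧ g k = a := by
  constructor
  · intro h
    subst h
    refine ⟨?_, Function.update_self k a f⟩
    funext i
    by_cases hi : i = k
    · subst hi; simp
    · simp [Function.update_apply, hi]
  · rintro ⟨h1, rfl⟩
    rw [h1]
    funext i
    by_cases hi : i = k
    · subst hi; simp
    · simp [Function.update_apply, hi]

lemma cond_symm_aux {k : Fin L} (f g : Fin L → Fin 2)
    (h : f = Function.update g k (f k)) : g = Function.update f k (g k) := by
  funext i
  by_cases hi : i = k
  · subst hi; simp
  · have h2 := congrFun h i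
    rw [Function.update_apply, if_neg hi] at h2
    rw [Function.update_apply, if_neg hi]
    exact h2.symm

lemma cond_symm {f g : Fin L → Fin 2} {k : Fin L} :
    f = Function.update g k (f k) ↔ g = Function.update f k (g k) :=
  ⟨cond_symm_aux f g, cond_symm_aux g f⟩

lemma act_delta (B : Matrix (Fin 2) (Fin 2) ℂ) (k : Fin L) (g : Fin L → Fin 2) :
    actFactor B k (δ g) =
      B 0 (g k) • δ (Function.update g k 0) + B 1 (g k) • δ (Function.update g k 1) := by
  funext f
  simp only [actFactor, δ_apply, Fin.sum_univ_two, Pi.add_apply, Pi.smul_apply, smul_eq_mul]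
  by_cases hP : f = Function.update g k (f k)
  · have hP' : g = Function.update f k (g k) := cond_symm.mp hP
    have e1 : ∀ a : Fin 2, (Function.update f k a = g) ↔ (g k = a) := by
      intro a
      rw [upd_eq_iff]
      exact ⟨fun h => h.2, fun h => ⟨hP, h⟩⟩
    have e2 : ∀ a : Fin 2, (f = Function.update g k a) ↔ (f k = a) := by
      intro a
      rw [eq_comm, upd_eq_iff]
      exact ⟨fun h => h.2, fun h => ⟨hP', h⟩⟩
    simp only [e1, e2]
    generalize f k = a
    generalize g k = b
    fin_cases a <;> fin_cases b <;> simp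
  · have e1 : ∀ a : Fin 2, ¬(Function.update f k a = g) := by
      intro a h
      exact hP (upd_eq_iff.mp h).1
    have e2 : ∀ a : Fin 2, ¬(f = Function.update g k a) := by
      intro a h
      exact hP ((cond_symm.mpr ((upd_eq_iff.mp h.symm).1)))
    simp [e1, e2]

noncomputable def wk (k : Fin L) : HL L :=
  ∑ j ∈ Finset.univ.erase k, δ (P j k)

noncomputable def cc (L : ℕ) : ℂ := (((Real.sqrt (L + 1) : ℝ) : ℂ))⁻¹

lemma cc_ne (L : ℕ) : cc L ≠ 0 := by
  have h1 : (0 : ℝ) < Real.sqrt (L + 1) := Real.sqrt_pos.mpr (by positivity)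
  simpa [cc] using Complex.ofReal_ne_zero.mpr h1.ne'

lemma e0_eq : e0 L = δ (zf L) := rfl

lemma wL_eq (hL : 1 ≤ L) : ((Real.sqrt L : ℝ) : ℂ) • wL L = ∑ j : Fin L, δ (eV j) := by
  have hs : (Real.sqrt L : ℝ) ≠ 0 := by
    have : (0:ℝ) < Real.sqrt L := Real.sqrt_pos.mpr (by exact_mod_cast Nat.lt_of_lt_of_le Nat.zero_lt_one hL)
    exact this.ne'
  funext f
  simp only [Pi.smul_apply, smul_eq_mul, wL, Finset.sum_apply, δ_apply]
  by_cases h : ∃ k : Fin L, f = Function.update (fun _ => 0) k 1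
  · obtain ⟨k, rfl⟩ := h
    have heq : Function.update (fun _ => (0 : Fin 2)) k 1 = eV k := rfl
    rw [if_pos ⟨k, rfl⟩, heq]
    have : ∑ j : Fin L, (if eV k = eV j then (1:ℂ) else 0) = 1 := by
      rw [Finset.sum_eq_single k]
      · simp
      · intro j _ hj
        rw [if_neg fun h' => hj (eV_inj h').symm]
      · simp
    rw [this]
    rw [← Complex.ofReal_mul]
    rw [mul_one_div, div_self hs]
    simp
  · rw [if_neg h, mul_zero]
    refine (Finset.sum_eq_zero fun j _ => ?_).symm
    exact if_neg fun h' => h ⟨j, h'⟩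

lemma x_eq (hL : 1 ≤ L) :
    xBorelL L = cc L • (δ (zf L) + ∑ j : Fin L, δ (eV j)) := by
  rw [xBorelL, ← wL_eq hL, e0_eq, cc]

lemma update_eV_self (k : Fin L) : Function.update (eV k) k 1 = eV k := by
  funext i
  by_cases hi : i = k
  · subst hi; simp
  · simp [Function.update_apply, hi]

lemma update_eV_zero {j k : Fin L} (h : j ≠ k) : Function.update (eV j) k 0 = eV j := by
  funext i
  by_cases hi : i = k
  · subst hi; simp [Ne.symm h]
  · simp [Function.update_apply, hi]

lemma update_zf_zero (k : Fin L) : Function.update (zf L) k 0 = zf L := by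
  funext i
  by_cases hi : i = k
  · subst hi; simp [zf]
  · simp [Function.update_apply, hi]

lemma act_Hm_x (hL : 1 ≤ L) (k : Fin L) :
    actFactor Hm k (xBorelL L) = xBorelL L - (2 * cc L) • δ (eV k) := by
  have hz : actFactor Hm k (δ (zf L)) = δ (zf L) := by
    rw [act_delta]
    have h0 : zf L k = 0 := rfl
    rw [h0, Hm00, Hm10, update_zf_zero, one_smul, zero_smul, add_zero]
  have he : ∀ j : Fin L, actFactor Hm k (δ (eV j)) =
      δ (eV j) - (if j = k then (2:ℂ) else 0) • δ (eV k) := by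
    intro j
    by_cases hj : j = k
    · subst hj
      rw [act_delta]
      have h1 : eV j j = 1 := by simp
      rw [h1, Hm01, Hm11, update_eV_self, zero_smul, zero_add, if_pos rfl]
      funext f
      simp only [Pi.sub_apply, Pi.smul_apply, neg_smul, one_smul, Pi.neg_apply, smul_eq_mul,
        δ_apply]
      ring
    · rw [act_delta]
      have h1 : eV j k = 0 := by rw [eV_apply, if_neg (fun h => hj h.symm)]
      rw [h1, Hm00, Hm10, update_eV_zero hj, one_smul, zero_smul, add_zero, if_neg hj,
        zero_smul, sub_zero]
  rw [x_eq hL, actFactor_smul_vec, actFactor_add_vec, actFactor_sum_vec, hz,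
    Finset.sum_congr rfl (fun j _ => he j), Finset.sum_sub_distrib, ← Finset.sum_smul,
    Finset.sum_ite_eq' Finset.univ k, if_pos (Finset.mem_univ k)]
  module

lemma act_E21_x (hL : 1 ≤ L) (k : Fin L) :
    actFactor E21 k (xBorelL L) = cc L • δ (eV k) + cc L • wk k := by
  have hz : actFactor E21 k (δ (zf L)) = δ (eV k) := by
    rw [act_delta]
    have h0 : zf L k = 0 := rfl
    have h1 : Function.update (zf L) k 1 = eV k := rfl
    rw [h0, E00, E10, h1, one_smul, zero_smul, zero_add]
  have he : ∀ j : Fin L, j ≠ k → actFactor E21 k (δ (eV j)) = δ (P j k) := by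
    intro j hj
    rw [act_delta]
    have h1 : eV j k = 0 := by rw [eV_apply, if_neg (fun h => hj h.symm)]
    rw [h1, E00, E10, one_smul, zero_smul, zero_add]
    rfl
  have hk0 : actFactor E21 k (δ (eV k)) = 0 := by
    rw [act_delta]
    have h1 : eV k k = 1 := by simp
    rw [h1, E01, E11, zero_smul, zero_smul, add_zero]
  have hsum : ∑ j : Fin L, actFactor E21 k (δ (eV j)) = wk k := by
    rw [← Finset.add_sum_erase Finset.univ _ (Finset.mem_univ k), hk0, zero_add, wk]
    exact Finset.sum_congr rfl fun j hj => he j (Finset.mem_erase.mp hj).1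
  rw [x_eq hL, actFactor_smul_vec, actFactor_add_vec, actFactor_sum_vec, hz, hsum, smul_add]

lemma wk_zf (k : Fin L) : wk k (zf L) = 0 := by
  rw [wk, Finset.sum_apply]
  refine Finset.sum_eq_zero fun j hj => ?_
  rw [δ_apply, if_neg fun h => P_ne_zf h.symm]

lemma wk_eV (k m : Fin L) : wk k (eV m) = 0 := by
  rw [wk, Finset.sum_apply]
  refine Finset.sum_eq_zero fun j hj => ?_
  rw [δ_apply, if_neg fun h => P_ne_eV (Finset.mem_erase.mp hj).1 m h.symm]

lemma wk_P {m n : Fin L} (hmn : m ≠ n) (k : Fin L) :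
    wk k (P m n) = (if k = m then 1 else 0) + (if k = n then 1 else 0) := by
  rw [wk, Finset.sum_apply]
  by_cases hkm : k = m
  · have hkn : k ≠ n := fun h => hmn (hkm.symm.trans h)
    rw [if_pos hkm, if_neg hkn, add_zero]
    rw [Finset.sum_eq_single_of_mem n
      (Finset.mem_erase.mpr ⟨fun h => hkn h.symm, Finset.mem_univ n⟩)]
    · rw [δ_apply, if_pos]
      exact (P_eq_iff hmn fun h => hkn h.symm).mpr (Or.inr ⟨hkm.symm, rfl⟩)
    · intro j hj hjn
      obtain ⟨hjk, -⟩ := Finset.mem_erase.mp hj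
      rw [δ_apply, if_neg]
      intro h
      rcases (P_eq_iff hmn hjk).mp h with ⟨h1, h2⟩ | ⟨h1, h2⟩
      · exact hkn h2.symm
      · exact hjn h2.symm
  · by_cases hkn : k = n
    · rw [if_neg hkm, if_pos hkn, zero_add]
      rw [Finset.sum_eq_single_of_mem m
        (Finset.mem_erase.mpr ⟨fun h => hkm h.symm, Finset.mem_univ m⟩)]
      · rw [δ_apply, if_pos]
        exact (P_eq_iff hmn fun h => hkm h.symm).mpr (Or.inl ⟨rfl, hkn.symm⟩)
      · intro j hj hjm
        obtain ⟨hjk, -⟩ := Finset.mem_erase.mp hj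
        rw [δ_apply, if_neg]
        intro h
        rcases (P_eq_iff hmn hjk).mp h with ⟨h1, h2⟩ | ⟨h1, h2⟩
        · exact hjm h1.symm
        · exact hkm h1.symm
    · rw [if_neg hkm, if_neg hkn, add_zero]
      refine Finset.sum_eq_zero fun j hj => ?_
      obtain ⟨hjk, -⟩ := Finset.mem_erase.mp hj
      rw [δ_apply, if_neg]
      intro h
      rcases (P_eq_iff hmn hjk).mp h with ⟨h1, h2⟩ | ⟨h1, h2⟩
      · exact hkn h2.symm
      · exact hkm h1.symm

end BorelW

open BorelW

/-- the span of `x = (e₀ + √L·w_L)/√(L+1)` together with the tangent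
vectors `∑ₖ Bₖ⁽ᵏ⁾x` generated by the Borel subalgebra has complex dimension `2L + 1`. -/
theorem borel_tangent_space_at_translated_W_state_L_qubits
    (L : ℕ) (hL : 3 ≤ L) :
    Module.finrank ℂ ↥(Submodule.span ℂ ({xBorelL L} ∪
      {u : HL L | ∃ B : Fin L → Matrix (Fin 2) (Fin 2) ℂ,
        (∀ k, IsLowerTriangularTraceless (B k)) ∧
        u = ∑ k : Fin L, actFactor (B k) k (xBorelL L)})) = 2 * L + 1 := by
  classical
  have hL1 : 1 ≤ L := by omega
  set b : Unit ⊕ Fin L ⊕ Fin L → HL L :=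
    Sum.elim (fun _ => δ (zf L)) (Sum.elim (fun k => δ (eV k)) wk) with hbdef
  -- linear independence
  have hb : LinearIndependent ℂ b := by
    rw [Fintype.linearIndependent_iff]
    intro g hg
    have key : ∀ f : Fin L → Fin 2,
        g (Sum.inl ()) * δ (zf L) f
        + ((∑ k : Fin L, g (Sum.inr (Sum.inl k)) * δ (eV k) f)
        + (∑ k : Fin L, g (Sum.inr (Sum.inr k)) * wk k f)) = 0 := by
      intro f
      have h0 := congrFun hg f
      rw [Finset.sum_apply] at h0
      simpa [hbdef, Fintype.sum_sum_type, smul_eq_mul] using h0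
    have h1 : g (Sum.inl ()) = 0 := by
      have := key (zf L)
      rw [δ_apply, if_pos rfl, mul_one,
        show (∑ k : Fin L, g (Sum.inr (Sum.inl k)) * δ (eV k) (zf L)) = 0 from
          Finset.sum_eq_zero fun k _ => by
            rw [δ_apply, if_neg (fun h => eV_ne_zf k h.symm), mul_zero],
        show (∑ k : Fin L, g (Sum.inr (Sum.inr k)) * wk k (zf L)) = 0 from
          Finset.sum_eq_zero fun k _ => by rw [wk_zf, mul_zero]] at this
      simpa using this
    have h2 : ∀ m, g (Sum.inr (Sum.inl m)) = 0 := by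
      intro m
      have := key (eV m)
      rw [δ_apply, if_neg (eV_ne_zf m), mul_zero,
        show (∑ k : Fin L, g (Sum.inr (Sum.inr k)) * wk k (eV m)) = 0 from
          Finset.sum_eq_zero fun k _ => by rw [wk_eV, mul_zero],
        show (∑ k : Fin L, g (Sum.inr (Sum.inl k)) * δ (eV k) (eV m))
            = g (Sum.inr (Sum.inl m)) from by
          rw [Finset.sum_eq_single m (fun k _ hk => by
              rw [δ_apply, if_neg (fun h => hk (eV_inj h).symm), mul_zero])
            (fun h => absurd (Finset.mem_univ m) h), δ_apply, if_pos rfl, mul_one]] at this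
      simpa using this
    have h3 : ∀ m n : Fin L, m ≠ n →
        g (Sum.inr (Sum.inr m)) + g (Sum.inr (Sum.inr n)) = 0 := by
      intro m n hmn
      have := key (P m n)
      rw [δ_apply, if_neg P_ne_zf, mul_zero,
        show (∑ k : Fin L, g (Sum.inr (Sum.inl k)) * δ (eV k) (P m n)) = 0 from
          Finset.sum_eq_zero fun k _ => by
            rw [δ_apply, if_neg (P_ne_eV hmn k), mul_zero],
        Finset.sum_congr rfl (fun k _ => by rw [wk_P hmn k])] at this
      simpa [mul_add, Finset.sum_add_distrib, mul_ite, mul_one, mul_zero,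
        Finset.sum_ite_eq'] using this
    intro i
    rcases i with _ | m | m
    · exact h1
    · exact h2 m
    · -- pick two other distinct indices
      have hcard : 1 < (Finset.univ.erase m).card := by
        rw [Finset.card_erase_of_mem (Finset.mem_univ m), Finset.card_univ, Fintype.card_fin]
        omega
      obtain ⟨n, hn, -⟩ := Finset.exists_mem_ne hcard m
      obtain ⟨hnm, -⟩ := Finset.mem_erase.mp hn
      have hcard2 : 0 < ((Finset.univ.erase m).erase n).card := by
        rw [Finset.card_erase_of_mem hn, Finset.card_erase_of_mem (Finset.mem_univ m),
          Finset.card_univ, Fintype.card_fin]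
        omega
      obtain ⟨p, hp⟩ := Finset.card_pos.mp hcard2
      obtain ⟨hpn, hp'⟩ := Finset.mem_erase.mp hp
      obtain ⟨hpm, -⟩ := Finset.mem_erase.mp hp'
      have e1 := h3 m n (fun h => hnm h.symm)
      have e2 := h3 m p (fun h => hpm h.symm)
      have e3 := h3 n p (fun h => hpn h.symm)
      linear_combination (e1 + e2 - e3) / 2
  -- span equality
  have hx_mem : xBorelL L ∈ Submodule.span ℂ (Set.range b) := by
    rw [x_eq hL1]
    refine Submodule.smul_mem _ _ (Submodule.add_mem _ ?_ ?_)
    · exact Submodule.subset_span ⟨Sum.inl (), rfl⟩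
    · exact Submodule.sum_mem _ fun j _ =>
        Submodule.subset_span ⟨Sum.inr (Sum.inl j), rfl⟩
  have key : Submodule.span ℂ ({xBorelL L} ∪
      {u : HL L | ∃ B : Fin L → Matrix (Fin 2) (Fin 2) ℂ,
        (∀ k, IsLowerTriangularTraceless (B k)) ∧
        u = ∑ k : Fin L, actFactor (B k) k (xBorelL L)}) =
      Submodule.span ℂ (Set.range b) := by
    apply le_antisymm
    · rw [Submodule.span_le]
      rintro u (rfl | ⟨B, hB, rfl⟩)
      · exact hx_mem
      · refine Submodule.sum_mem _ fun k _ => ?_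
        rw [lower_decomp (hB k), actFactor_add_mat, actFactor_smul_mat, actFactor_smul_mat,
          act_Hm_x hL1 k, act_E21_x hL1 k]
        refine Submodule.add_mem _ (Submodule.smul_mem _ _ (Submodule.sub_mem _ hx_mem
          (Submodule.smul_mem _ _ ?_))) (Submodule.smul_mem _ _ (Submodule.add_mem _
          (Submodule.smul_mem _ _ ?_) (Submodule.smul_mem _ _ ?_)))
        · exact Submodule.subset_span ⟨Sum.inr (Sum.inl k), rfl⟩
        · exact Submodule.subset_span ⟨Sum.inr (Sum.inl k), rfl⟩
        · exact Submodule.subset_span ⟨Sum.inr (Sum.inr k), rfl⟩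
    · rw [Submodule.span_le]
      set S : Set (HL L) := ({xBorelL L} ∪
        {u : HL L | ∃ B : Fin L → Matrix (Fin 2) (Fin 2) ℂ,
          (∀ k, IsLowerTriangularTraceless (B k)) ∧
          u = ∑ k : Fin L, actFactor (B k) k (xBorelL L)}) with hSdef
      have hxS : xBorelL L ∈ Submodule.span ℂ S := Submodule.subset_span (Or.inl rfl)
      have hact : ∀ (M : Matrix (Fin 2) (Fin 2) ℂ), IsLowerTriangularTraceless M →
          ∀ k : Fin L, actFactor M k (xBorelL L) ∈ Submodule.span ℂ S := by
        intro M hM k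
        apply Submodule.subset_span
        refine Or.inr ⟨fun j => if j = k then M else 0, fun j => ?_, ?_⟩
        · dsimp only
          split_ifs with hj
          · exact hM
          · exact zeroLT_mem
        · symm
          rw [Finset.sum_eq_single_of_mem k (Finset.mem_univ k)
            (fun j _ hj => by simp only [if_neg hj, actFactor_zero])]
          simp
      have h2c : (2 : ℂ) * cc L ≠ 0 := mul_ne_zero two_ne_zero (cc_ne L)
      have hδe : ∀ k : Fin L, δ (eV k) ∈ Submodule.span ℂ S := by
        intro k
        have : δ (eV k) = ((2 : ℂ) * cc L)⁻¹ • (xBorelL L - actFactor Hm k (xBorelL L)) := by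
          rw [act_Hm_x hL1 k, sub_sub_cancel, smul_smul, inv_mul_cancel₀ h2c, one_smul]
        rw [this]
        exact Submodule.smul_mem _ _ (Submodule.sub_mem _ hxS (hact Hm Hm_mem k))
      have hwk : ∀ k : Fin L, wk k ∈ Submodule.span ℂ S := by
        intro k
        have : wk k = (cc L)⁻¹ • actFactor E21 k (xBorelL L) - δ (eV k) := by
          rw [act_E21_x hL1 k, smul_add, smul_smul, smul_smul,
            inv_mul_cancel₀ (cc_ne L), one_smul, one_smul, add_sub_cancel_left]
        rw [this]
        exact Submodule.sub_mem _
          (Submodule.smul_mem _ _ (hact E21 E21_mem k)) (hδe k)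
      have hδz : δ (zf L) ∈ Submodule.span ℂ S := by
        have : δ (zf L) = (cc L)⁻¹ • xBorelL L - ∑ j : Fin L, δ (eV j) := by
          rw [x_eq hL1, smul_smul, inv_mul_cancel₀ (cc_ne L), one_smul, add_sub_cancel_right]
        rw [this]
        exact Submodule.sub_mem _ (Submodule.smul_mem _ _ hxS)
          (Submodule.sum_mem _ fun j _ => hδe j)
      rintro u ⟨i, rfl⟩
      rcases i with _ | m | m
      · exact hδz
      · exact hδe m
      · exact hwk m
  rw [key, finrank_span_eq_card hb]
  simp only [Fintype.card_sum, Fintype.card_unit, Fintype.card_fin]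
  omega
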